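/- arXiv:2012.12046 — 3 statements merged into one kernel-verified Lean document; each statement's English description precedes it below -/
import Mathlib

section
/- Let k be a field with char k ≠ 2 and a ∈ k \ {0}. Let σ be the k-automorphism of the rational function field k(x,y) defined by σ(x) = a/x and σ(y) = a/y. Then σ has order 2, and the fixed field k(x,y)^⟨σ⟩ equals k(s,t), where s = (xy + a)/(x + y) and t = (xy − a)/(x − y). -/
set_option maxHeartbeats 1000000
set_option synthInstance.maxHeartbeats 200000

open Module IntermediateField MvPolynomial

/-- Lemma (Hashimoto–Hoshi–Rikuna): for `σ : x ↦ a/x, y ↦ a/y` on `k(x,y)`,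
`σ` has order 2 and `k(x,y)^⟨σ⟩ = k(s,t)` with
`s = (xy+a)/(x+y)`, `t = (xy-a)/(x-y)`. -/
theorem stmt0 (k F : Type) [Field k] [Field F] [Algebra k F]
    (h2 : (2 : k) ≠ 0) (a : k) (ha : a ≠ 0)
    (x y : F) (hind : AlgebraicIndependent k ![x, y])
    (hadj : IntermediateField.adjoin k {x, y} = ⊤)
    (σ : F ≃ₐ[k] F)
    (hx : σ x = algebraMap k F a / x) (hy : σ y = algebraMap k F a / y) :
    orderOf σ = 2 ∧
    IntermediateField.fixedField (Subgroup.zpowers σ) =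
      IntermediateField.adjoin k
        {(x * y + algebraMap k F a) / (x + y),
         (x * y - algebraMap k F a) / (x - y)} := by
  set A : F := algebraMap k F a with hA
  -- nonvanishing facts from algebraic independence
  have hzero : ∀ p : MvPolynomial (Fin 2) k, (MvPolynomial.aeval ![x,y]) p = 0 → p = 0 := by
    intro p hp
    exact hind (by simpa using hp)
  have key : ∀ p : MvPolynomial (Fin 2) k, ∀ v : Fin 2 → k,
      MvPolynomial.eval v p ≠ 0 → (MvPolynomial.aeval ![x,y]) p ≠ 0 := by
    intro p v hv hp
    exact hv (by rw [hzero p hp]; simp)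
  have hx0 : x ≠ 0 := by
    have := key (X 0) ![1,1] (by simp)
    simpa using this
  have hy0 : y ≠ 0 := by
    have := key (X 1) ![1,1] (by simp)
    simpa using this
  have hA0 : A ≠ 0 := by
    simpa [hA] using (map_ne_zero (algebraMap k F)).mpr ha
  have h2F : (2:F) ≠ 0 := by
    intro h
    exact h2 ((algebraMap k F).injective (by rw [map_ofNat, map_zero]; exact h))
  have hxy : x + y ≠ 0 := by
    have := key (X 0 + X 1) ![1,1]
      (by simp only [map_add, eval_X]; norm_num; exact fun hc => h2 (by linear_combination hc))
    simpa using this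
  have hxmy : x - y ≠ 0 := by
    have := key (X 0 - X 1) ![1,0] (by simp)
    simpa using this
  have hX2 : x * x ≠ A := by
    have h := key (X 0 * X 0 - C a) ![0,0] (by simpa using ha)
    have e : (aeval ![x,y]) (X 0 * X 0 - C a) = x * x - A := by simp [hA]
    intro hc
    exact h (by rw [e, hc, sub_self])
  have hY2 : y * y ≠ A := by
    have h := key (X 1 * X 1 - C a) ![0,0] (by simpa using ha)
    have e : (aeval ![x,y]) (X 1 * X 1 - C a) = y * y - A := by simp [hA]
    intro hc
    exact h (by rw [e, hc, sub_self])
  -- σ has order 2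
  have hne : σ ≠ 1 := by
    intro h1
    have : σ x = x := by rw [h1]; rfl
    rw [hx, div_eq_iff hx0] at this
    exact hX2 this.symm
  have hsq : σ ^ 2 = 1 := by
    have hgen : ∀ z ∈ IntermediateField.adjoin k {x, y}, σ (σ z) = z := by
      intro z hz
      induction hz using IntermediateField.adjoin_induction with
      | mem w hw =>
        rcases hw with rfl | rfl
        · rw [hx, map_div₀, σ.commutes, hx, ← hA, div_div_eq_mul_div, mul_comm,
            mul_div_assoc, div_self hA0, mul_one]
        · rw [hy, map_div₀, σ.commutes, hy, ← hA, div_div_eq_mul_div, mul_comm,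
            mul_div_assoc, div_self hA0, mul_one]
      | algebraMap w => rw [σ.commutes, σ.commutes]
      | add u v _ _ hu hv => rw [map_add, map_add, hu, hv]
      | inv u _ hu => rw [map_inv₀, map_inv₀, hu]
      | mul u v _ _ hu hv => rw [map_mul, map_mul, hu, hv]
    ext z
    have := hgen z (by rw [hadj]; trivial)
    simpa [pow_two] using this
  have horder : orderOf σ = 2 := orderOf_eq_prime hsq hne
  refine ⟨horder, ?_⟩
  -- abbreviations
  set s : F := (x*y+A)/(x+y) with hs
  set t : F := (x*y-A)/(x-y) with ht
  set E : IntermediateField k F := IntermediateField.adjoin k {s, t} with hE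
  -- identities
  have est : s + t = 2*y*(x*x-A)/((x+y)*(x-y)) := by
    rw [hs, ht, div_add_div _ _ hxy hxmy]
    congr 1
    ring
  have est2 : s - t = 2*x*(A-y*y)/((x+y)*(x-y)) := by
    rw [hs, ht, div_sub_div _ _ hxy hxmy]
    congr 1
    ring
  have hst : s + t ≠ 0 := by
    rw [est]
    exact div_ne_zero (mul_ne_zero (mul_ne_zero h2F hy0) (sub_ne_zero.mpr hX2))
      (mul_ne_zero hxy hxmy)
  have hst2 : s - t ≠ 0 := by
    rw [est2]
    refine div_ne_zero (mul_ne_zero (mul_ne_zero h2F hx0) ?_) (mul_ne_zero hxy hxmy)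
    exact sub_ne_zero.mpr fun h => hY2 h.symm
  have yid : y = (2*A - (s-t)*x)/(s+t) := by
    rw [eq_div_iff hst, hs, ht]
    field_simp
    ring
  have quad : x^2 + ((2*(s*t-A))/(s-t))*x + A = 0 := by
    have h1 : (s-t)*(x^2) + (2*(s*t-A))*x + A*(s-t) = 0 := by
      rw [hs, ht]
      field_simp
      ring
    field_simp
    linear_combination h1
  -- σ fixes s and t
  have hσA : σ A = A := by rw [hA]; exact σ.commutes a
  have hfixs : σ s = s := by
    rw [hs]
    simp only [map_div₀, map_add, map_mul, hx, hy, hσA]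
    have d1 : A/x + A/y = A*(x+y)/(x*y) := by field_simp; ring
    have n1 : A*(x+y)/(x*y) ≠ 0 :=
      div_ne_zero (mul_ne_zero hA0 hxy) (mul_ne_zero hx0 hy0)
    rw [d1, div_eq_div_iff n1 hxy]
    field_simp
    ring
  have hfixt : σ t = t := by
    rw [ht]
    simp only [map_div₀, map_sub, map_mul, hx, hy, hσA]
    have hyx : y - x ≠ 0 := fun h => hxmy (by linear_combination -h)
    have d2 : A/x - A/y = A*(y-x)/(x*y) := by field_simp
    have n2 : A*(y-x)/(x*y) ≠ 0 :=
      div_ne_zero (mul_ne_zero hA0 hyx) (mul_ne_zero hx0 hy0)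
    rw [d2, div_eq_div_iff n2 hxmy]
    field_simp
    ring
  -- E ≤ fixedField
  have hEle : E ≤ IntermediateField.fixedField (Subgroup.zpowers σ) := by
    rw [hE, IntermediateField.adjoin_le_iff]
    have hfix : ∀ u : F, σ u = u → u ∈ IntermediateField.fixedField (Subgroup.zpowers σ) := by
      intro u hu
      intro g
      have hmem : (g : F ≃ₐ[k] F) ∈ MulAction.stabilizer (F ≃ₐ[k] F) u := by
        have : Subgroup.zpowers σ ≤ MulAction.stabilizer (F ≃ₐ[k] F) u :=
          Subgroup.zpowers_le.mpr hu
        exact this g.2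
      exact hmem
    rintro u (rfl | rfl)
    · exact hfix _ hfixs
    · exact hfix _ hfixt
  -- membership of the ingredients in E
  have hsE : s ∈ E := IntermediateField.subset_adjoin _ _ (by left; rfl)
  have htE : t ∈ E := IntermediateField.subset_adjoin _ _ (by right; rfl)
  have hAE : A ∈ E := by rw [hA]; exact E.algebraMap_mem a
  -- the quadratic polynomial over E
  set c₁ : E := ⟨(2*(s*t-A))/(s-t), by
    have h2E : (2:F) ∈ E := by
      rw [show (2:F) = algebraMap k F 2 from (map_ofNat _ 2).symm]
      exact E.algebraMap_mem 2
    exact div_mem (mul_mem h2E (sub_mem (mul_mem hsE htE) hAE))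
      (sub_mem hsE htE)⟩ with hc₁
  set c₀ : E := ⟨A, hAE⟩ with hc₀
  set p : Polynomial E := Polynomial.X^2 + (Polynomial.C c₁ * Polynomial.X + Polynomial.C c₀)
    with hp
  have pmonic : p.Monic := by
    apply Polynomial.monic_X_pow_add
    refine lt_of_le_of_lt (Polynomial.degree_linear_le) ?_
    decide
  have paev : (Polynomial.aeval x) p = 0 := by
    rw [hp]
    simp only [map_add, map_mul, map_pow, Polynomial.aeval_X, Polynomial.aeval_C]
    have e1 : algebraMap E F c₁ = (2*(s*t-A))/(s-t) := rfl
    have e0 : algebraMap E F c₀ = A := rfl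
    rw [e1, e0]
    linear_combination quad
  have hInt : IsIntegral (↥E) x := ⟨p, pmonic, paev⟩
  -- K = E⟮x⟯ = ⊤
  set K : IntermediateField (↥E) F := IntermediateField.adjoin (↥E) {x} with hK
  have hxK : x ∈ K := IntermediateField.subset_adjoin _ _ rfl
  have hmemE : ∀ u : F, u ∈ E → u ∈ K := by
    intro u hu
    have : algebraMap (↥E) F ⟨u, hu⟩ ∈ K := K.algebraMap_mem _
    exact this
  have hyK : y ∈ K := by
    rw [yid]
    have h2K : (2:F) ∈ K := by
      have h2E : (2:F) ∈ E := by
        rw [show (2:F) = algebraMap k F 2 from (map_ofNat _ 2).symm]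
        exact E.algebraMap_mem 2
      exact hmemE _ h2E
    exact div_mem (sub_mem (mul_mem h2K (hmemE A hAE))
      (mul_mem (sub_mem (hmemE s hsE) (hmemE t htE)) hxK)) (add_mem (hmemE s hsE) (hmemE t htE))
  have hKtop : K = ⊤ := by
    have h1 : IntermediateField.adjoin k {x, y} ≤ K.restrictScalars k := by
      rw [IntermediateField.adjoin_le_iff]
      rintro u (rfl | rfl)
      · exact hxK
      · exact hyK
    rw [hadj] at h1
    have h2 : K.restrictScalars k = ⊤ := top_le_iff.mp h1
    apply IntermediateField.restrictScalars_injective k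
    rw [h2, IntermediateField.restrictScalars_top]
  -- finrank bounds
  have hfd : FiniteDimensional (↥E) F := by
    have : FiniteDimensional (↥E) K := IntermediateField.adjoin.finiteDimensional hInt
    rw [hKtop] at this
    exact (IntermediateField.topEquiv (F := ↥E) (E := F)).toLinearEquiv.finiteDimensional
  have hfr1 : finrank (↥E) F ≤ 2 := by
    have e1 : finrank (↥E) K = (minpoly (↥E) x).natDegree :=
      IntermediateField.adjoin.finrank hInt
    have e2 : finrank (↥E) F = finrank (↥E) K := by
      rw [hKtop]
      exact ((IntermediateField.topEquiv (F := ↥E) (E := F)).toLinearEquiv.finrank_eq).symm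
    rw [e2, e1]
    have hd : (minpoly (↥E) x).degree ≤ p.degree :=
      minpoly.degree_le_of_ne_zero _ _ (pmonic.ne_zero) paev
    have hnd : (minpoly (↥E) x).natDegree ≤ p.natDegree :=
      Polynomial.natDegree_le_natDegree hd
    refine hnd.trans ?_
    rw [hp]
    refine (Polynomial.natDegree_add_le _ _).trans ?_
    simp only [Polynomial.natDegree_X_pow]
    refine max_le le_rfl ?_
    refine (Polynomial.natDegree_add_le _ _).trans ?_
    refine max_le ?_ ?_
    · exact (Polynomial.natDegree_C_mul_le _ _).trans (by simp)
    · simp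
  -- finrank of fixed field
  have hfinG : Finite (Subgroup.zpowers σ) := by
    have : IsOfFinOrder σ := orderOf_pos_iff.mp (by omega)
    exact Set.finite_coe_iff.mpr this.finite_zpowers
  have : Fintype (Subgroup.zpowers σ) := Fintype.ofFinite _
  have hcard : Fintype.card (Subgroup.zpowers σ) = 2 := by
    rw [← Nat.card_eq_fintype_card, Nat.card_zpowers, horder]
  have hfr2 : finrank (IntermediateField.fixedField (Subgroup.zpowers σ)) F = 2 :=
    (FixedPoints.finrank_eq_card (Subgroup.zpowers σ) F).trans hcard
  -- conclude
  have : E = IntermediateField.fixedField (Subgroup.zpowers σ) := by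
    refine IntermediateField.eq_of_le_of_finrank_le' hEle ?_
    rw [hfr2]
    exact hfr1
  exact this.symm
end

section
/- Let k be a field, a ∈ k \ {0}, and let c, d ∈ k with (c,d) ≠ (0,0). Set b = c(x + a/x) + d ∈ k(x). Let σ be the k-automorphism of k(x,y) with σ(x) = a/x and σ(y) = b/y. Then k(x,y)^⟨σ⟩ = k(u,v), where u = (x − a/x)/(xy − ab/(xy)) and v = (y − b/y)/(xy − ab/(xy)). -/
/-!
σ² fixes `x` and `y`, so `σ` is an involution and, by Artin's theorem, `k(x,y)` has degree 2 over
the fixed field `L`. Both `u` and `v` are quotients of two σ-anti-invariant elements `w - c/w`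
(with `σ w = c/w`), so `K := k(u,v) ⊆ L`. Conversely, with `Δ = x²y² - ab` one has
`uΔ = (x² - a)y` and `vΔ = (y² - b)x`, whence `(x + a/x)(cu² + v) = 1 + av² - du²` and
`y(1 - xv) = ub`. Since `y` is transcendental over `k(x)`, neither `Δ` nor `cu² + v` vanishes
(`Δ²(cu² + v)` is a quadratic in `y²` with leading coefficient `x³`), and then `1 - xv ≠ 0`.
So `x + a/x ∈ K` and `y ∈ K(x)`: `k(x,y) = K(x)` has degree at most 2 over `K`, forcing `K = L`.
-/

open IntermediateField Polynomial Module

namespace IntermediateField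

variable {k F : Type*} [Field k] [Field F] [Algebra k F]

theorem mem_fixedField_zpowers_iff {σ : F ≃ₐ[k] F} {z : F} :
    z ∈ fixedField (Subgroup.zpowers σ) ↔ σ z = z := by
  simpa [Subgroup.forall_mem_zpowers, AlgEquiv.smul_def] using
    MulAction.mem_fixedBy_zpowers_iff_mem_fixedBy (g := σ) (a := z)

theorem finrank_fixedField_zpowers {σ : F ≃ₐ[k] F} (hσ : IsOfFinOrder σ) :
    finrank (fixedField (Subgroup.zpowers σ)) F = orderOf σ := by
  have : Finite (Subgroup.zpowers σ) := hσ.finite_zpowers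
  have := Fintype.ofFinite (Subgroup.zpowers σ)
  rw [← Nat.card_zpowers, Nat.card_eq_fintype_card]
  exact FixedPoints.finrank_eq_card (Subgroup.zpowers σ) F

theorem fixedField_zpowers_eq_of_le {σ : F ≃ₐ[k] F} (hσ : IsOfFinOrder σ)
    {K : IntermediateField k F} [FiniteDimensional K F]
    (hK : K ≤ fixedField (Subgroup.zpowers σ)) (h : finrank K F ≤ orderOf σ) :
    fixedField (Subgroup.zpowers σ) = K :=
  (eq_of_le_of_finrank_le' hK (h.trans (finrank_fixedField_zpowers hσ).ge)).symm

theorem adjoin_simple_eq_top_of_mem {x y : F} (hxy : adjoin k {x, y} = ⊤)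
    {K : IntermediateField k F} (hy : y ∈ adjoin K {x}) : adjoin K {x} = ⊤ := by
  rw [← restrictScalars_eq_top_iff (K := k), eq_top_iff, ← hxy, adjoin_le_iff]
  exact Set.insert_subset_iff.mpr
    ⟨mem_adjoin_simple_self K x, Set.singleton_subset_iff.mpr hy⟩

end IntermediateField

section AdjoinSimple

variable {K F : Type*} [Field K] [Field F] [Algebra K F] {x : F}

theorem finiteDimensional_of_adjoin_simple_eq_top (hx : K⟮x⟯ = ⊤) (hint : IsIntegral K x) :
    FiniteDimensional K F := by
  have := adjoin.finiteDimensional hint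
  rw [hx] at this
  exact Module.Finite.equiv topEquiv.toLinearEquiv

theorem finrank_le_natDegree_of_adjoin_simple_eq_top (hx : K⟮x⟯ = ⊤) {p : K[X]} (hp : p ≠ 0)
    (hpx : aeval x p = 0) : finrank K F ≤ p.natDegree := by
  rw [← finrank_top', ← hx, adjoin.finrank (isAlgebraic_iff_isIntegral.mp ⟨p, hp, hpx⟩)]
  exact natDegree_le_natDegree (minpoly.degree_le_of_ne_zero K x hp hpx)

theorem finiteDimensional_and_finrank_le_two_of_add_div_eq (hx : K⟮x⟯ = ⊤) (hx0 : x ≠ 0)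
    (a t : K) (ht : x + algebraMap K F a / x = algebraMap K F t) :
    FiniteDimensional K F ∧ finrank K F ≤ 2 := by
  set p : K[X] := X ^ 2 - C t * X + C a
  have hp : p.Monic := by unfold p; monicity!
  have hdeg : p.natDegree = 2 := by unfold p; compute_degree!
  have hpx : aeval x p = 0 := by
    simp only [p, map_add, map_sub, map_mul, map_pow, aeval_X, aeval_C, ← ht]
    field_simp
    ring
  exact ⟨finiteDimensional_of_adjoin_simple_eq_top hx ⟨p, hp, hpx⟩,
    hdeg ▸ finrank_le_natDegree_of_adjoin_simple_eq_top hx hp.ne_zero hpx⟩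

end AdjoinSimple

theorem Transcendental.coeff_eq_zero_of_quadratic {k F : Type*} [Field k] [Field F]
    [Algebra k F] {E : IntermediateField k F} {z p q r : F} (hz : Transcendental E z)
    (hp : p ∈ E) (hq : q ∈ E) (hr : r ∈ E) (h : p * z ^ 2 + q * z + r = 0) :
    p = 0 ∧ q = 0 ∧ r = 0 := by
  have hP := transcendental_iff.mp hz (C ⟨p, hp⟩ * X ^ 2 + C ⟨q, hq⟩ * X + C ⟨r, hr⟩)
    (by simpa using h)
  have h2 := congrArg (coeff · 2) hP
  have h1 := congrArg (coeff · 1) hP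
  have h0 := congrArg (coeff · 0) hP
  simp only [coeff_add, coeff_C_mul, coeff_X_pow, coeff_X, coeff_C, coeff_zero] at h2 h1 h0
  norm_num at h2 h1 h0
  exact ⟨congrArg Subtype.val h2, congrArg Subtype.val h1, congrArg Subtype.val h0⟩

theorem AlgebraicIndependent.transcendental_adjoin_pair {k F : Type*} [Field k] [Field F]
    [Algebra k F] {x y : F} (h : AlgebraicIndependent k ![x, y]) : Transcendental k⟮x⟯ y := by
  have := h.transcendental_adjoin (s := {0}) (i := 1) (by simp)
  rw [Set.image_singleton] at this
  exact IntermediateField.transcendental_adjoin_iff.mpr this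

theorem Transcendental.sq_ne_algebraMap {R S : Type*} [CommRing R] [Nontrivial R] [CommRing S]
    [Algebra R S] {x : S} (hx : Transcendental R x) (a : R) : x ^ 2 ≠ algebraMap R S a :=
  fun h ↦ hx.pow two_pos (h ▸ isAlgebraic_algebraMap a)

namespace AlgEquiv

variable {k F : Type*} [Field k] [Field F] [Algebra k F] {σ : F ≃ₐ[k] F} {w c : F}

theorem ne_zero_of_apply_eq_div (hw : σ w = c / w) (hw0 : w ≠ 0) : c ≠ 0 := by
  rintro rfl
  exact hw0 (σ.injective (by rw [hw, zero_div, map_zero]))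

theorem apply_apply_of_apply_eq_div (hc : σ c = c) (hw : σ w = c / w) (hw0 : w ≠ 0) :
    σ (σ w) = w := by
  rw [hw, map_div₀, hc, hw, div_div_cancel₀ (ne_zero_of_apply_eq_div hw hw0)]

theorem apply_add_div_of_apply_eq_div (hc : σ c = c) (hw : σ w = c / w) (hw0 : w ≠ 0) :
    σ (w + c / w) = w + c / w := by
  rw [map_add, map_div₀, hc, hw, div_div_cancel₀ (ne_zero_of_apply_eq_div hw hw0), add_comm]

theorem apply_sub_div_of_apply_eq_div (hc : σ c = c) (hw : σ w = c / w) (hw0 : w ≠ 0) :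
    σ (w - c / w) = -(w - c / w) := by
  rw [map_sub, map_div₀, hc, hw, div_div_cancel₀ (ne_zero_of_apply_eq_div hw hw0), neg_sub]

theorem apply_mul_of_apply_eq_div {w' c' : F} (hw : σ w = c / w) (hw' : σ w' = c' / w') :
    σ (w * w') = c * c' / (w * w') := by
  rw [map_mul, hw, hw', div_mul_div_comm]

theorem apply_sub_div_div_sub_div_of_apply_eq_div {w' c' : F} (hc : σ c = c) (hw : σ w = c / w)
    (hw0 : w ≠ 0) (hc' : σ c' = c') (hw' : σ w' = c' / w') (hw0' : w' ≠ 0) :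
    σ ((w - c / w) / (w' - c' / w')) = (w - c / w) / (w' - c' / w') := by
  rw [map_div₀, apply_sub_div_of_apply_eq_div hc hw hw0,
    apply_sub_div_of_apply_eq_div hc' hw' hw0', neg_div_neg_eq]

theorem eq_one_of_adjoin_eq_top {s : Set F} (hs : adjoin k s = ⊤) (h : ∀ z ∈ s, σ z = z) :
    σ = 1 := by
  have hfix : adjoin k s ≤ fixedField (Subgroup.zpowers σ) :=
    adjoin_le_iff.mpr fun z hz ↦ mem_fixedField_zpowers_iff.mpr (h z hz)
  ext z
  exact mem_fixedField_zpowers_iff.mp (hfix (hs ▸ mem_top))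

theorem sq_eq_one_of_adjoin_pair_eq_top {w' c' : F} (hs : adjoin k {w, w'} = ⊤)
    (hc : σ c = c) (hw : σ w = c / w) (hw0 : w ≠ 0) (hc' : σ c' = c') (hw' : σ w' = c' / w')
    (hw0' : w' ≠ 0) :
    σ ^ 2 = 1 := by
  refine eq_one_of_adjoin_eq_top hs ?_
  rintro z (rfl | rfl)
  exacts [apply_apply_of_apply_eq_div hc hw hw0, apply_apply_of_apply_eq_div hc' hw' hw0']

end AlgEquiv

namespace HajjaKang

variable {F : Type*} [Field F] {A C D b x y u v : F}

theorem mul_sub_div_eq (hx : x ≠ 0) (hy : y ≠ 0) :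
    x * y - A * b / (x * y) = (x ^ 2 * y ^ 2 - A * b) / (x * y) := by
  field_simp

theorem u_mul_eq (hx : x ≠ 0) (hy : y ≠ 0) (hΔ : x ^ 2 * y ^ 2 - A * b ≠ 0) :
    (x - A / x) / (x * y - A * b / (x * y)) * (x ^ 2 * y ^ 2 - A * b) = (x ^ 2 - A) * y := by
  rw [mul_sub_div_eq hx hy, div_div_eq_mul_div, div_mul_cancel₀ _ hΔ]
  field_simp

theorem v_mul_eq (hx : x ≠ 0) (hy : y ≠ 0) (hΔ : x ^ 2 * y ^ 2 - A * b ≠ 0) :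
    (y - b / y) / (x * y - A * b / (x * y)) * (x ^ 2 * y ^ 2 - A * b) = (y ^ 2 - b) * x := by
  rw [mul_sub_div_eq hx hy, div_div_eq_mul_div, div_mul_cancel₀ _ hΔ]
  field_simp

variable (hu : u * (x ^ 2 * y ^ 2 - A * b) = (x ^ 2 - A) * y)
  (hv : v * (x ^ 2 * y ^ 2 - A * b) = (y ^ 2 - b) * x)
include hu hv

theorem quadratic (hx : x ≠ 0) (hΔ : x ^ 2 * y ^ 2 - A * b ≠ 0)
    (hb : b = C * (x + A / x) + D) :
    (x + A / x) * (C * u ^ 2 + v) = 1 + A * v ^ 2 - D * u ^ 2 := by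
  have hxb : x * b = C * x ^ 2 + D * x + C * A := by rw [hb]; field_simp; ring
  have key : ((C * u ^ 2 + v) * (x ^ 2 + A) + (D * u ^ 2 - 1 - A * v ^ 2) * x) *
      ((x ^ 2 * y ^ 2 - A * b) ^ 2 * x) = 0 := by
    linear_combination ((x * C * (x ^ 2 + A) + D * x ^ 2) *
        (u * (x ^ 2 * y ^ 2 - A * b) + (x ^ 2 - A) * y)) * hu +
      (x * (x ^ 2 + A) * (x ^ 2 * y ^ 2 - A * b) -
        A * x ^ 2 * (v * (x ^ 2 * y ^ 2 - A * b) + (y ^ 2 - b) * x)) * hv +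
      (-(x * y ^ 2) * (x ^ 2 - A) ^ 2) * hxb
  have := (mul_eq_zero.mp key).resolve_right (by positivity)
  field_simp
  linear_combination this

theorem y_mul_eq (hΔ : x ^ 2 * y ^ 2 - A * b ≠ 0) : y * (1 - x * v) = u * b := by
  refine mul_right_cancel₀ hΔ ?_
  linear_combination (-(x * y)) * hv + (-b) * hu

omit hu in
theorem mul_one_sub_eq : (x ^ 2 * y ^ 2 - A * b) * (1 - x * v) = b * (x ^ 2 - A) := by
  linear_combination (-x) * hv

theorem sq_mul_eq : (x ^ 2 * y ^ 2 - A * b) ^ 2 * (C * u ^ 2 + v) =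
    x ^ 3 * (y ^ 2) ^ 2 + (C * (x ^ 2 - A) ^ 2 - A * b * x - b * x ^ 3) * y ^ 2 +
      A * b ^ 2 * x := by
  linear_combination (C * (u * (x ^ 2 * y ^ 2 - A * b) + (x ^ 2 - A) * y)) * hu +
    (x ^ 2 * y ^ 2 - A * b) * hv

section IntermediateField

variable {k : Type*} [Field k] [Algebra k F] {E : IntermediateField k F}

omit hu hv in
theorem sq_mul_sq_sub_ne_zero (hy : Transcendental E y) (hx : x ∈ E) (hA : A ∈ E) (hb : b ∈ E)
    (hx0 : x ≠ 0) : x ^ 2 * y ^ 2 - A * b ≠ 0 := fun h ↦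
  pow_ne_zero 2 hx0 (hy.coeff_eq_zero_of_quadratic (pow_mem hx 2) (zero_mem E)
    (neg_mem (mul_mem hA hb)) (by linear_combination h)).1

theorem mul_sq_add_ne_zero (hy : Transcendental E y) (hx : x ∈ E) (hA : A ∈ E) (hb : b ∈ E)
    (hC : C ∈ E) (hx0 : x ≠ 0) : C * u ^ 2 + v ≠ 0 := by
  intro h
  have key := sq_mul_eq (C := C) hu hv
  rw [h, mul_zero] at key
  refine pow_ne_zero 3 hx0 ((hy.pow two_pos).coeff_eq_zero_of_quadratic (pow_mem hx 3) ?_ ?_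
    key.symm).1 <;> apply_rules [sub_mem, mul_mem, pow_mem]

theorem add_div_mem_and_mem_adjoin (hA : A ∈ E) (hC : C ∈ E) (hD : D ∈ E) (huE : u ∈ E)
    (hvE : v ∈ E) (hx : x ≠ 0) (hΔ : x ^ 2 * y ^ 2 - A * b ≠ 0)
    (hb : b = C * (x + A / x) + D) (hCuv : C * u ^ 2 + v ≠ 0) (hxv : 1 - x * v ≠ 0) :
    x + A / x ∈ E ∧ y ∈ adjoin E {x} := by
  have ht : x + A / x ∈ E := by
    rw [eq_div_of_mul_eq hCuv (quadratic hu hv hx hΔ hb)]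
    exact div_mem (sub_mem (add_mem (one_mem E) (mul_mem hA (pow_mem hvE 2)))
      (mul_mem hD (pow_mem huE 2))) (add_mem (mul_mem hC (pow_mem huE 2)) hvE)
  have hbE : b ∈ E := hb ▸ add_mem (mul_mem hC ht) hD
  set T := adjoin E {x}
  refine ⟨ht, ?_⟩
  rw [eq_div_of_mul_eq hxv (y_mul_eq hu hv hΔ)]
  exact div_mem (mul_mem (T.algebraMap_mem ⟨u, huE⟩) (T.algebraMap_mem ⟨b, hbE⟩)) <|
    sub_mem (one_mem T) (mul_mem (mem_adjoin_simple_self E x) (T.algebraMap_mem ⟨v, hvE⟩))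

end IntermediateField

end HajjaKang

theorem HajjaKang.finiteDimensional_and_finrank_adjoin_le_two {k F : Type*} [Field k] [Field F]
    [Algebra k F] {a c d : k} {x y b u v : F} (hind : AlgebraicIndependent k ![x, y])
    (hadj : adjoin k {x, y} = ⊤)
    (hb : b = algebraMap k F c * (x + algebraMap k F a / x) + algebraMap k F d) (hb0 : b ≠ 0)
    (hu : u = (x - algebraMap k F a / x) / (x * y - algebraMap k F a * b / (x * y)))
    (hv : v = (y - b / y) / (x * y - algebraMap k F a * b / (x * y))) :
    FiniteDimensional (adjoin k {u, v}) F ∧ finrank (adjoin k {u, v}) F ≤ 2 := by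
  set A := algebraMap k F a
  have hx0 : x ≠ 0 := by simpa using hind.ne_zero 0
  have hy0 : y ≠ 0 := by simpa using hind.ne_zero 1
  have hTx : Transcendental k x := by simpa using hind.transcendental 0
  have hxA : x ^ 2 - A ≠ 0 := sub_ne_zero.mpr (hTx.sq_ne_algebraMap a)
  have hTy := hind.transcendental_adjoin_pair
  have hxE : x ∈ k⟮x⟯ := mem_adjoin_simple_self k x
  have hbE : b ∈ k⟮x⟯ := hb ▸ add_mem (mul_mem (k⟮x⟯.algebraMap_mem c)
    (add_mem hxE (div_mem (k⟮x⟯.algebraMap_mem a) hxE))) (k⟮x⟯.algebraMap_mem d)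
  have hΔ := HajjaKang.sq_mul_sq_sub_ne_zero hTy hxE (k⟮x⟯.algebraMap_mem a) hbE hx0
  have hu' : u * (x ^ 2 * y ^ 2 - A * b) = (x ^ 2 - A) * y := hu ▸ HajjaKang.u_mul_eq hx0 hy0 hΔ
  have hv' : v * (x ^ 2 * y ^ 2 - A * b) = (y ^ 2 - b) * x := hv ▸ HajjaKang.v_mul_eq hx0 hy0 hΔ
  have hCuv := HajjaKang.mul_sq_add_ne_zero hu' hv' hTy hxE (k⟮x⟯.algebraMap_mem a) hbE
    (k⟮x⟯.algebraMap_mem c) hx0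
  have hxv : 1 - x * v ≠ 0 := fun h ↦ mul_ne_zero hb0 hxA <| by
    rw [← HajjaKang.mul_one_sub_eq hv', h, mul_zero]
  set K := adjoin k {u, v}
  obtain ⟨htK, hyK⟩ := HajjaKang.add_div_mem_and_mem_adjoin hu' hv' (K.algebraMap_mem a)
    (K.algebraMap_mem c) (K.algebraMap_mem d) (subset_adjoin k _ (Set.mem_insert u {v}))
    (subset_adjoin k _ (Set.mem_insert_of_mem u rfl)) hx0 hΔ hb hCuv hxv
  exact finiteDimensional_and_finrank_le_two_of_add_div_eq (adjoin_simple_eq_top_of_mem hadj hyK)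
    hx0 (algebraMap k K a) ⟨_, htK⟩ rfl

theorem stmt1_general (k F : Type) [Field k] [Field F] [Algebra k F]
    (a : k) (c d : k)
    (x y : F) (hind : AlgebraicIndependent k ![x, y])
    (hadj : IntermediateField.adjoin k {x, y} = ⊤)
    (b : F)
    (hb : b = algebraMap k F c * (x + algebraMap k F a / x) + algebraMap k F d)
    (σ : F ≃ₐ[k] F)
    (hx : σ x = algebraMap k F a / x) (hy : σ y = b / y) :
    IntermediateField.fixedField (Subgroup.zpowers σ) =
      IntermediateField.adjoin k
        {(x - algebraMap k F a / x) / (x * y - algebraMap k F a * b / (x * y)),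
         (y - b / y) / (x * y - algebraMap k F a * b / (x * y))} := by
  have hx0 : x ≠ 0 := by simpa using hind.ne_zero 0
  have hy0 : y ≠ 0 := by simpa using hind.ne_zero 1
  have hσa : σ (algebraMap k F a) = algebraMap k F a := σ.commutes a
  have hσb : σ b = b := by
    rw [hb, map_add, map_mul, σ.commutes, σ.commutes,
      σ.apply_add_div_of_apply_eq_div hσa hx hx0]
  have hσab : σ (algebraMap k F a * b) = algebraMap k F a * b := by rw [map_mul, hσa, hσb]
  have hσxy := σ.apply_mul_of_apply_eq_div hx hy
  have hσ2 := σ.sq_eq_one_of_adjoin_pair_eq_top hadj hσa hx hx0 hσb hy hy0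
  have hσ1 : σ ≠ 1 := by
    intro h
    rw [h, AlgEquiv.one_apply, eq_div_iff hx0, ← sq] at hx
    exact (by simpa using hind.transcendental 0 : Transcendental k x).sq_ne_algebraMap a hx
  obtain ⟨_, hrank⟩ := HajjaKang.finiteDimensional_and_finrank_adjoin_le_two hind hadj hb
    (σ.ne_zero_of_apply_eq_div hy hy0) rfl rfl
  have hxy0 := mul_ne_zero hx0 hy0
  refine fixedField_zpowers_eq_of_le (isOfFinOrder_iff_pow_eq_one.mpr ⟨2, two_pos, hσ2⟩)
    (adjoin_le_iff.mpr ?_) (orderOf_eq_prime hσ2 hσ1 ▸ hrank)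
  rintro z (rfl | rfl) <;> rw [SetLike.mem_coe, mem_fixedField_zpowers_iff]
  · exact σ.apply_sub_div_div_sub_div_of_apply_eq_div hσa hx hx0 hσab hσxy hxy0
  · exact σ.apply_sub_div_div_sub_div_of_apply_eq_div hσb hy hy0 hσab hσxy hxy0

/-- Lemma (Hajja–Kang / Kang): for `σ : x ↦ a/x, y ↦ b/y` on `k(x,y)`, where
`b = c(x + a/x) + d` with `(c,d) ≠ (0,0)`, one has `k(x,y)^⟨σ⟩ = k(u,v)` with
`u = (x - a/x)/(xy - ab/(xy))` and `v = (y - b/y)/(xy - ab/(xy))`. -/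
theorem stmt1 (k F : Type) [Field k] [Field F] [Algebra k F]
    (a : k) (ha : a ≠ 0) (c d : k) (hcd : ¬(c = 0 ∧ d = 0))
    (x y : F) (hind : AlgebraicIndependent k ![x, y])
    (hadj : IntermediateField.adjoin k {x, y} = ⊤)
    (b : F)
    (hb : b = algebraMap k F c * (x + algebraMap k F a / x) + algebraMap k F d)
    (σ : F ≃ₐ[k] F)
    (hx : σ x = algebraMap k F a / x) (hy : σ y = b / y) :
    IntermediateField.fixedField (Subgroup.zpowers σ) =
      IntermediateField.adjoin k
        {(x - algebraMap k F a / x) / (x * y - algebraMap k F a * b / (x * y)),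
         (y - b / y) / (x * y - algebraMap k F a * b / (x * y))} :=
  stmt1_general k F a c d x y hind hadj b hb σ hx hy
end

section
/- Let k be a field of characteristic ≠ 3 containing a primitive cube root of unity ω. Let σ be the k-automorphism of k(x,y) given by σ(x) = y, σ(y) = 1/(xy). Define u = (1 + ω⁻¹x + ωxy)/(1 + x + xy) and v = (1 + ωx + ω⁻¹xy)/(1 + x + xy). Then k(u,v) = k(x,y), σ(u) = ωu, and σ(v) = ω⁻¹v. -/
/-!
Up to the common factor `1 / x`, `σ` permutes the homogeneous triple `(1, x, xy)`
cyclically: `(1, y, 1/x) = (x, xy, 1) / x`. The elements `u` and `v` are ratios of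
coordinates of the discrete Fourier transform of this triple with respect to `ω`, so a
cyclic shift multiplies them by `ω` and `ω⁻¹`. Since `3 ≠ 0`, the Fourier transform with
respect to `ω⁻¹` inverts the one with respect to `ω` up to the factor `3`, which expresses
`x` and `xy` rationally in `u` and `v`.
-/

open IntermediateField

theorem inv_eq_sq_of_sq_add_add_one {F : Type*} [Field F] {w : F} (hw : w ^ 2 + w + 1 = 0) :
    w⁻¹ = w ^ 2 :=
  inv_eq_of_mul_eq_one_right (by linear_combination (w - 1) * hw)

theorem cube_root_dft_inv {F : Type*} [Field F] {w a b u v : F} (hw : w ^ 2 + w + 1 = 0)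
    (h3 : (3 : F) ≠ 0) (hD : 1 + a + b ≠ 0)
    (hu : u = (1 + w⁻¹ * a + w * b) / (1 + a + b))
    (hv : v = (1 + w * a + w⁻¹ * b) / (1 + a + b)) :
    a = (1 + w * u + w⁻¹ * v) / (1 + u + v) ∧ b = (1 + w⁻¹ * u + w * v) / (1 + u + v) := by
  rw [inv_eq_sq_of_sq_add_add_one hw] at *
  have hsum : (1 + u + v) * (1 + a + b) = 3 := by
    rw [hu, hv]; field_simp; linear_combination (a + b) * hw
  have hsum0 : 1 + u + v ≠ 0 := fun h => h3 (by rw [← hsum, h, zero_mul])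
  constructor
  · rw [eq_div_iff hsum0]
    apply mul_right_cancel₀ hD
    rw [hu, hv]; field_simp
    linear_combination (-b * w ^ 2 + (b - 2 * a) * w + a ^ 2 + a * b + 2 * a - b - 1) * hw
  · rw [eq_div_iff hsum0]
    apply mul_right_cancel₀ hD
    rw [hu, hv]; field_simp
    linear_combination (-a * w ^ 2 + (a - 2 * b) * w + b ^ 2 + a * b + 2 * b - a - 1) * hw

theorem mem_adjoin_pair_of_cube_root_dft {k F : Type*} [Field k] [Field F] [Algebra k F]
    {ω : k} (hω : ω ^ 2 + ω + 1 = 0) (h3 : (3 : k) ≠ 0) {a b u v : F} (hD : 1 + a + b ≠ 0)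
    (hu : u = (1 + (algebraMap k F ω)⁻¹ * a + algebraMap k F ω * b) / (1 + a + b))
    (hv : v = (1 + algebraMap k F ω * a + (algebraMap k F ω)⁻¹ * b) / (1 + a + b)) :
    a ∈ adjoin k {u, v} ∧ b ∈ adjoin k {u, v} := by
  have hw : algebraMap k F ω ^ 2 + algebraMap k F ω + 1 = 0 := by
    simpa using congrArg (algebraMap k F) hω
  have h3F : (3 : F) ≠ 0 := by
    rw [← map_ofNat (algebraMap k F) 3]; exact (map_ne_zero _).2 h3
  obtain ⟨ha, hb⟩ := cube_root_dft_inv hw h3F hD hu hv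
  have hu' : u ∈ adjoin k {u, v} := subset_adjoin k _ (Set.mem_insert _ _)
  have hv' : v ∈ adjoin k {u, v} := subset_adjoin k _ (Set.mem_insert_of_mem _ rfl)
  have hω' : algebraMap k F ω ∈ adjoin k {u, v} := IntermediateField.algebraMap_mem _ ω
  have hsum : 1 + u + v ∈ adjoin k {u, v} := add_mem (add_mem (one_mem _) hu') hv'
  rw [ha, hb]
  refine ⟨div_mem (add_mem (add_mem (one_mem _) ?_) ?_) hsum,
    div_mem (add_mem (add_mem (one_mem _) ?_) ?_) hsum⟩
  exacts [mul_mem hω' hu', mul_mem (inv_mem hω') hv', mul_mem (inv_mem hω') hu',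
    mul_mem hω' hv']

theorem map_div_one_add_add_mul {k F G : Type*} [CommSemiring k] [Field F] [Algebra k F]
    [FunLike G F F] [AlgHomClass G k F F] (σ : G) {x y : F} (hx0 : x ≠ 0) (hy0 : y ≠ 0)
    (hx : σ x = y) (hy : σ y = 1 / (x * y)) (α β : k) :
    σ ((1 + algebraMap k F α * x + algebraMap k F β * (x * y)) / (1 + x + x * y)) =
      (algebraMap k F β + x + algebraMap k F α * (x * y)) / (1 + x + x * y) := by
  simp only [map_div₀, map_add, map_mul, map_one, AlgHomClass.commutes, hx, hy]
  rw [← mul_div_mul_right _ _ hx0]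
  congr 1 <;> field_simp <;> ring

theorem AlgebraicIndependent.one_add_add_mul_ne_zero {k F : Type*} [CommRing k] [Nontrivial k]
    [CommRing F] [Algebra k F] {x y : F} (hind : AlgebraicIndependent k ![x, y]) :
    1 + x + x * y ≠ 0 := by
  intro h
  have := hind.eq_zero_of_aeval_eq_zero (1 + .X 0 + .X 0 * .X 1) (by simpa using h)
  simpa using congrArg MvPolynomial.constantCoeff this

/-- Lemma (Chu–Hoshi–Hu–Kang): for `σ : x ↦ y, y ↦ 1/(xy)` on `k(x,y)`, with
`ω ∈ k` a primitive cube root of unity, the elements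
`u = (1 + ω⁻¹x + ωxy)/(1 + x + xy)` and `v = (1 + ωx + ω⁻¹xy)/(1 + x + xy)`
satisfy `k(u,v) = k(x,y)`, `σ(u) = ωu` and `σ(v) = ω⁻¹v`. -/
theorem stmt3 (k F : Type) [Field k] [Field F] [Algebra k F]
    (h3 : (3 : k) ≠ 0) (ω : k) (hω : ω ^ 2 + ω + 1 = 0)
    (x y : F) (hind : AlgebraicIndependent k ![x, y])
    (hadj : IntermediateField.adjoin k {x, y} = ⊤)
    (σ : F ≃ₐ[k] F)
    (hx : σ x = y) (hy : σ y = 1 / (x * y))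
    (u v : F)
    (hu : u = (1 + (algebraMap k F ω)⁻¹ * x + algebraMap k F ω * (x * y)) /
        (1 + x + x * y))
    (hv : v = (1 + algebraMap k F ω * x + (algebraMap k F ω)⁻¹ * (x * y)) /
        (1 + x + x * y)) :
    IntermediateField.adjoin k {u, v} = ⊤ ∧
    σ u = algebraMap k F ω * u ∧ σ v = (algebraMap k F ω)⁻¹ * v := by
  have hx0 : x ≠ 0 := by simpa using hind.ne_zero 0
  have hy0 : y ≠ 0 := by simpa using hind.ne_zero 1
  obtain ⟨hxK, hxyK⟩ :=
    mem_adjoin_pair_of_cube_root_dft hω h3 hind.one_add_add_mul_ne_zero hu hv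
  set w := algebraMap k F ω
  have hw : w ^ 2 + w + 1 = 0 := by simpa using congrArg (algebraMap k F) hω
  refine ⟨eq_top_iff.2 (hadj ▸ adjoin_le_iff.2 ?_), ?_, ?_⟩
  · rintro z (rfl | rfl)
    exacts [hxK, by simpa [hx0] using div_mem hxyK hxK]
  · rw [hu, ← map_inv₀, map_div_one_add_add_mul σ hx0 hy0 hx hy, map_inv₀,
      inv_eq_sq_of_sq_add_add_one hw, mul_div_assoc']
    congr 1
    linear_combination (1 - w) * x * hw
  · rw [hv, ← map_inv₀, map_div_one_add_add_mul σ hx0 hy0 hx hy, map_inv₀,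
      inv_eq_sq_of_sq_add_add_one hw, mul_div_assoc']
    congr 1
    linear_combination (1 - w) * (x + w * (x * y)) * hw
end
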